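/- Let g : ℝ → ℝ be continuous, nonnegative, not identically zero, compactly supported, and even. Then for every real N ≠ 0, |∫ e^{iNt} g(t) dt| < ∫ g(t) dt. -/

import Mathlib

/-!
Write `I = ∫ e^{iNt} g(t) dt` as `‖I‖ e^{iθ}`. Then
`‖I‖ = Re (e^{-iθ} I) = ∫ cos (Nt - θ) g(t) dt`, and `cos (Nt - θ) ≤ 1` with equality only on
a countable set of `t`. Since `g` is positive on a nonempty open set, which is uncountable, the
continuous function `(1 - cos (Nt - θ)) g(t) ≥ 0` is somewhere positive, so its integral is
positive.
-/

open MeasureTheory Real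

theorem exists_mem_cos_mul_sub_lt_one {U : Set ℝ} (hU : IsOpen U) (hUne : U.Nonempty) {N : ℝ}
    (hN : N ≠ 0) (θ : ℝ) : ∃ t ∈ U, cos (N * t - θ) < 1 := by
  have hcount : {t : ℝ | cos (N * t - θ) = 1}.Countable := by
    refine (Set.countable_range fun n : ℤ => (n * (2 * π) + θ) / N).mono ?_
    intro t ht
    obtain ⟨n, hn⟩ := (cos_eq_one_iff _).1 ht
    exact ⟨n, by field_simp; linarith⟩
  obtain ⟨t, ht, htU⟩ := (hcount.dense_compl ℝ).exists_mem_open hU hUne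
  exact ⟨t, htU, (cos_le_one _).lt_of_ne ht⟩

theorem Complex.exists_norm_integral_eq_integral_re {α : Type*} [MeasurableSpace α]
    {μ : Measure α} {F : α → ℂ} (hF : Integrable F μ) :
    ∃ θ : ℝ, ‖∫ x, F x ∂μ‖ = ∫ x, (exp (-(θ * I)) * F x).re ∂μ := by
  refine ⟨arg (∫ x, F x ∂μ), ?_⟩
  have hre := Complex.reCLM.integral_comp_comm (hF.const_mul (exp (-(arg (∫ x, F x ∂μ) * I))))
  simp only [Complex.reCLM_apply] at hre
  rw [hre, integral_const_mul]
  set z := ∫ x, F x ∂μ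
  calc ‖z‖ = (exp (-(arg z * I)) * (‖z‖ * exp (arg z * I))).re := by
        rw [mul_left_comm, ← Complex.exp_add, neg_add_cancel, Complex.exp_zero, mul_one]
        simp
    _ = (exp (-(arg z * I)) * z).re := by rw [norm_mul_exp_arg_mul_I]

theorem Complex.re_exp_mul_exp_mul_ofReal (θ N t a : ℝ) :
    (exp (-(θ * I)) * (exp (I * N * t) * a)).re = Real.cos (N * t - θ) * a := by
  have : exp (-(θ * I)) * (exp (I * N * t) * a) = exp (↑(N * t - θ) * I) * a := by
    rw [← mul_assoc, ← Complex.exp_add]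
    push_cast
    ring_nf
  rw [this, re_mul_ofReal, exp_ofReal_mul_I_re]

theorem integral_mul_lt_integral_of_le_one {X : Type*} [TopologicalSpace X] [MeasurableSpace X]
    [OpensMeasurableSpace X] {μ : Measure X} [μ.IsOpenPosMeasure] [IsFiniteMeasureOnCompacts μ]
    {f g : X → ℝ} (hf : Continuous f) (hg : Continuous g) (hgc : HasCompactSupport g)
    (hf1 : ∀ x, f x ≤ 1) (hg0 : ∀ x, 0 ≤ g x) {x : X} (hfx : f x < 1) (hgx : 0 < g x) :
    ∫ x, f x * g x ∂μ < ∫ x, g x ∂μ := by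
  have hpos : 0 < ∫ x, (1 - f x) * g x ∂μ :=
    ((continuous_const.sub hf).mul hg).integral_pos_of_hasCompactSupport_nonneg_nonzero
      hgc.mul_left (fun y => mul_nonneg (sub_nonneg.2 (hf1 y)) (hg0 y))
      (mul_pos (sub_pos.2 hfx) hgx).ne'
  simp only [sub_mul, one_mul] at hpos
  have hfg : Integrable (fun x => f x * g x) μ :=
    (hf.mul hg).integrable_of_hasCompactSupport hgc.mul_left
  rw [integral_sub (hg.integrable_of_hasCompactSupport hgc) hfg] at hpos
  linarith

theorem stmt_7_general (g : ℝ → ℝ) (hg : Continuous g) (hpos : ∀ t, 0 ≤ g t)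
    (hne : ∃ t, g t ≠ 0) (hcs : HasCompactSupport g) :
    ∀ N : ℝ, N ≠ 0 →
      ‖(∫ t : ℝ, Complex.exp (Complex.I * N * t) * (g t : ℂ))‖ <
        ∫ t : ℝ, g t := by
  intro N hN
  have hint : Integrable fun t : ℝ => Complex.exp (Complex.I * N * t) * (g t : ℂ) :=
    (by fun_prop : Continuous _).integrable_of_hasCompactSupport
      (hcs.comp_left Complex.ofReal_zero).mul_left
  obtain ⟨θ, hθ⟩ := Complex.exists_norm_integral_eq_integral_re hint
  simp only [Complex.re_exp_mul_exp_mul_ofReal] at hθ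
  obtain ⟨t₀, hgt₀⟩ := hne
  obtain ⟨t, hgt, hcos⟩ := exists_mem_cos_mul_sub_lt_one (isOpen_lt continuous_const hg)
    ⟨t₀, (hpos t₀).lt_of_ne' hgt₀⟩ hN θ
  rw [hθ]
  exact integral_mul_lt_integral_of_le_one (by fun_prop) hg hcs (fun _ => cos_le_one _) hpos
    hcos hgt

/-- For a continuous, nonnegative, not identically zero, compactly
supported, even function `g`, and every `N ≠ 0`,
`|∫ e^{iNt} g(t) dt| < ∫ g(t) dt`. -/
theorem stmt_7 (g : ℝ → ℝ) (hg : Continuous g) (hpos : ∀ t, 0 ≤ g t)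
    (hne : ∃ t, g t ≠ 0) (hcs : HasCompactSupport g)
    (heven : ∀ t, g (-t) = g t) :
    ∀ N : ℝ, N ≠ 0 →
      ‖(∫ t : ℝ, Complex.exp (Complex.I * N * t) * (g t : ℂ))‖ <
        ∫ t : ℝ, g t :=
  stmt_7_general g hg hpos hne hcs
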